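/- arXiv:0912.0970 — 9 statements merged into one kernel-verified Lean document; each statement's English description precedes it below -/
import Mathlib

section
/- Let P and S be languages over Σ. There exists a prefix-closed language C with P ∩ C = S if and only if P ∩ (compl(P) ∪ S)^pref = S, where (compl(P) ∪ S)^pref is the largest prefix-closed sublanguage of compl(P) ∪ S. -/
/-!
Supervisory control via language equation solving: common definitions.
A language over alphabet `α` is a set of finite words `Set (List α)`.
-/

variable {α : Type*}

/-- Prefix closure of a language: `Init(L) = {u | ∃ v, u ++ v ∈ L}`. -/
def InitL (L : Set (List α)) : Set (List α) := {u | ∃ v, u ++ v ∈ L}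

/-- A language is prefix-closed if it contains its prefix closure. -/
def IsPrefixClosed (L : Set (List α)) : Prop := InitL L ⊆ L

/-- `M^pref`: the largest prefix-closed sublanguage of `M`. -/
def prefCl (M : Set (List α)) : Set (List α) := {w | w ∈ M ∧ ∀ p : List α, p <+: w → p ∈ M}

/-- The partial trace map `tr_L` for the `Σuc`-extension, as a graph relation:
`Tr L Suc w t` means `tr_L(w)` is defined and equals `t`. -/
inductive Tr (L : Set (List α)) (Suc : Set α) : List α → List α → Prop
  | nil : Tr L Suc [] []
  | keep {p t : List α} {a : α} : Tr L Suc p t → t ++ [a] ∈ L → Tr L Suc (p ++ [a]) (t ++ [a])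
  | drop {p t : List α} {a : α} : Tr L Suc p t → t ++ [a] ∉ L → a ∈ Suc → Tr L Suc (p ++ [a]) t

/-- `Σuc`-extension of a language: `Ext(L) = {w | tr_L(w) is defined}`. -/
def ExtL (L : Set (List α)) (Suc : Set α) : Set (List α) := {w | ∃ t, Tr L Suc w t}

open Classical in
/-- `π`: erase all letters of `Suo` from a word. -/
noncomputable def proj (Suo : Set α) : List α → List α
  | [] => []
  | a :: w => if a ∈ Suo then proj Suo w else a :: proj Suo w

/-- `Σuo`-folding of a language. -/
def Fold (Suo : Set α) (L : Set (List α)) : Set (List α) :=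
  {w | proj Suo w ∈ L ∧ ∀ (p : List α) (a : α), p ++ [a] <+: w → a ∈ Suo → proj Suo p ++ [a] ∈ L}

/-- `Real(L)` for a nonempty prefix-closed language `L`. -/
def RealL (Suo : Set α) (L : Set (List α)) : Set (List α) :=
  {w | ∀ (p q : List α) (a : α), w = p ++ [a] ++ q →
    ∃ u : List α, proj Suo u = proj Suo p ∧ u ++ [a] ∈ L}

/-- Concatenation of languages. -/
def conc (L M : Set (List α)) : Set (List α) := {w | ∃ u ∈ L, ∃ v ∈ M, w = u ++ v}

/-- `A*`: all words whose letters all lie in the subalphabet `A`. -/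
def ucStar (A : Set α) : Set (List α) := {w | ∀ a ∈ w, a ∈ A}

/-- Existence of a prefix-closed solution iff `(compl(P) ∪ S)^pref` is a solution. -/
theorem prefixClosed_solvable_iff (P S : Set (List α)) :
    (∃ C : Set (List α), IsPrefixClosed C ∧ P ∩ C = S) ↔ P ∩ prefCl (Pᶜ ∪ S) = S := by
  constructor
  · rintro ⟨C, hpc, hPC⟩
    ext w
    constructor
    · rintro ⟨hwP, hwM, -⟩
      rcases hwM with h | h
      · exact absurd hwP h
      · exact h
    · intro hwS
      have hwP : w ∈ P := (hPC ▸ hwS).1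
      have hwC : w ∈ C := (hPC ▸ hwS).2
      refine ⟨hwP, Or.inr hwS, fun p hp => ?_⟩
      obtain ⟨v, rfl⟩ := hp
      have hpC : p ∈ C := hpc ⟨v, hwC⟩
      by_cases hpP : p ∈ P
      · exact Or.inr (hPC ▸ ⟨hpP, hpC⟩)
      · exact Or.inl hpP
  · intro h
    refine ⟨prefCl (Pᶜ ∪ S), ?_, h⟩
    rintro u ⟨v, hv, hall⟩
    exact ⟨hall u ⟨v, rfl⟩, fun p hp => hall p (hp.trans ⟨v, rfl⟩)⟩
end

section
/- Let P and S be languages over Σ and suppose the equation P ∩ X = S has a prefix-closed solution. Then for every prefix-closed language C: P ∩ C = S if and only if Init(S) ⊆ C ⊆ (compl(P) ∪ S)^pref. -/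
/-!
Supervisory control via language equation solving: common definitions.
A language over alphabet `α` is a set of finite words `Set (List α)`.
-/

variable {α : Type*}

/-- When the equation is solvable, the prefix-closed solutions are exactly the prefix-closed
languages between `Init(S)` and `(compl(P) ∪ S)^pref`. -/
theorem supervisor_characterization (P S : Set (List α))
    (hsolv : ∃ C : Set (List α), IsPrefixClosed C ∧ P ∩ C = S)
    (C : Set (List α)) (hC : IsPrefixClosed C) :
    P ∩ C = S ↔ InitL S ⊆ C ∧ C ⊆ prefCl (Pᶜ ∪ S) := by

  obtain ⟨C0, hC0, hC0eq⟩ := hsolv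
  have hSP : S ⊆ P := by rw [← hC0eq]; exact Set.inter_subset_left
  constructor
  · rintro rfl
    refine ⟨?_, ?_⟩
    · rintro u ⟨v, hv⟩
      exact hC ⟨v, hv.2⟩
    · intro w hw
      refine ⟨?_, ?_⟩
      · by_cases hwP : w ∈ P
        · exact Or.inr ⟨hwP, hw⟩
        · exact Or.inl hwP
      · intro p ⟨q, hq⟩
        have hpC : p ∈ C := hC ⟨q, hq ▸ hw⟩
        by_cases hpP : p ∈ P
        · exact Or.inr ⟨hpP, hpC⟩
        · exact Or.inl hpP
  · rintro ⟨h1, h2⟩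
    ext w
    constructor
    · rintro ⟨hwP, hwC⟩
      rcases (h2 hwC).1 with h | h
      · exact absurd hwP h
      · exact h
    · intro hwS
      exact ⟨hSP hwS, h1 ⟨[], by simpa using hwS⟩⟩
end

section
/- Let P and S be languages over Σ and suppose the equation P ∩ X = S has a prefix-closed solution. Then Init(S) is a progressive supervisor: Init(S) is prefix-closed, P ∩ Init(S) = S, and Init(P) ∩ Init(Init(S)) ⊆ Init(S). -/
/-!
Supervisory control via language equation solving: common definitions.
A language over alphabet `α` is a set of finite words `Set (List α)`.
-/

variable {α : Type*}

/-- If the equation is solvable, `Init(S)` is a progressive supervisor. -/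
theorem initS_progressive_supervisor (P S : Set (List α))
    (hsolv : ∃ C : Set (List α), IsPrefixClosed C ∧ P ∩ C = S) :
    IsPrefixClosed (InitL S) ∧ P ∩ InitL S = S ∧ InitL P ∩ InitL (InitL S) ⊆ InitL S := by
  obtain ⟨C, hC, hPC⟩ := hsolv
  have hpc : IsPrefixClosed (InitL S) := by
    rintro u ⟨v', v, hv⟩
    exact ⟨v' ++ v, by simpa [List.append_assoc] using hv⟩
  refine ⟨hpc, ?_, ?_⟩
  · apply Set.Subset.antisymm
    · rintro w ⟨hwP, v, hwv⟩
      have hwvC : w ++ v ∈ C := (hPC ▸ hwv).2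
      have hwC : w ∈ C := hC ⟨v, hwvC⟩
      exact hPC ▸ ⟨hwP, hwC⟩
    · intro w hw
      exact ⟨(hPC ▸ hw : w ∈ P ∩ C).1, [], by simpa using hw⟩
  · rintro w ⟨-, hw⟩
    exact hpc hw
end

section
/- Let Σ be a type with three pairwise distinct elements a, b, c, and let P = {[a], [a,b,c]} and S = {[a]} be languages over Σ. Then the equation P ∩ X = S has a prefix-closed solution, but the largest prefix-closed solution (compl(P) ∪ S)^pref is not progressive, i.e. Init(P) ∩ Init((compl(P) ∪ S)^pref) ⊄ Init(S). -/
/-!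
Supervisory control via language equation solving: common definitions.
A language over alphabet `α` is a set of finite words `Set (List α)`.
-/

variable {α : Type*}

/-- For `P = {a, abc}` and `S = {a}` the equation is solvable but the largest prefix-closed
solution `(compl(P) ∪ S)^pref` is not progressive. -/
theorem largest_supervisor_not_progressive {α : Type*} (a b c : α)
    (hab : a ≠ b) (hac : a ≠ c) (hbc : b ≠ c) :
    (∃ C : Set (List α), IsPrefixClosed C ∧
        ({[a], [a, b, c]} : Set (List α)) ∩ C = {[a]}) ∧
      ¬ (InitL ({[a], [a, b, c]} : Set (List α)) ∩
          InitL (prefCl (({[a], [a, b, c]} : Set (List α))ᶜ ∪ {[a]})) ⊆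
            InitL ({[a]} : Set (List α))) := by
  constructor
  · refine ⟨{[], [a]}, ?_, ?_⟩
    · intro u ⟨v, hv⟩
      rcases hv with h | h
      · simp_all
      · simp only [Set.mem_singleton_iff] at h
        rcases List.append_eq_cons_iff.mp h with ⟨h1, _⟩ | ⟨l, hl, hl2⟩
        · left; exact h1
        · right; simp_all
    · ext w
      constructor
      · rintro ⟨hP, hC⟩
        rcases hC with h | h
        · subst h; rcases hP with h | h <;> simp_all
        · exact h
      · rintro rfl
        exact ⟨Or.inl rfl, Or.inr rfl⟩
  · intro h
    have hmem : [a, b] ∈ InitL ({[a], [a, b, c]} : Set (List α)) ∩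
        InitL (prefCl (({[a], [a, b, c]} : Set (List α))ᶜ ∪ {[a]})) := by
      constructor
      · exact ⟨[c], Or.inr rfl⟩
      · refine ⟨[], ?_⟩
        constructor
        · left
          intro hx
          rcases hx with hx | hx <;> simp_all
        · intro p hp
          rcases hp with ⟨t, ht⟩
          rcases p with _ | ⟨x, p⟩
          · left; intro hx; rcases hx with hx | hx <;> exact absurd hx (by simp)
          · rcases p with _ | ⟨y, p⟩
            · simp at ht; right; simp [ht.1]
            · rcases p with _ | ⟨z, p⟩
              · simp at ht
                left
                intro hx
                simp only [Set.mem_insert_iff, Set.mem_singleton_iff] at hx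
                rcases hx with hx | hx <;>
                  · have := congrArg List.length hx; simp at this
              · exfalso
                have := congrArg List.length ht
                simp at this
    have := h hmem
    rcases this with ⟨v, hv⟩
    simp only [Set.mem_singleton_iff] at hv
    have : ([a,b] ++ v).length = 1 := by rw [hv]; rfl
    simp at this
end

section
/- Let P and S be languages over Σ and suppose the equation P ∩ X = S has a prefix-closed solution. Then for every prefix-closed language C: C is a progressive solution (i.e. P ∩ C = S and Init(P) ∩ Init(C) ⊆ Init(S)) if and only if Init(S) ⊆ C ⊆ (compl(Init(P)) ∪ Init(S))^pref. -/
/-!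
Supervisory control via language equation solving: common definitions.
A language over alphabet `α` is a set of finite words `Set (List α)`.
-/

variable {α : Type*}

/-- When the equation is solvable, the progressive prefix-closed solutions are exactly the
prefix-closed languages between `Init(S)` and `(compl(Init(P)) ∪ Init(S))^pref`. -/
theorem progressive_characterization (P S : Set (List α))
    (hsolv : ∃ C : Set (List α), IsPrefixClosed C ∧ P ∩ C = S)
    (C : Set (List α)) (hC : IsPrefixClosed C) :
    (P ∩ C = S ∧ InitL P ∩ InitL C ⊆ InitL S) ↔
      InitL S ⊆ C ∧ C ⊆ prefCl ((InitL P)ᶜ ∪ InitL S) := by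
  obtain ⟨C₀, hC₀pc, hC₀⟩ := hsolv
  constructor
  · rintro ⟨hsol, hprog⟩
    constructor
    · intro u ⟨v, huv⟩
      have : u ++ v ∈ C := (hsol ▸ huv).2
      exact hC ⟨v, this⟩
    · intro w hw
      have key : ∀ p : List α, p <+: w → p ∈ (InitL P)ᶜ ∪ InitL S := by
        rintro p ⟨q, rfl⟩
        by_cases hp : p ∈ InitL P
        · exact Or.inr (hprog ⟨hp, ⟨q, hw⟩⟩)
        · exact Or.inl hp
      exact ⟨key w (List.prefix_refl w), key⟩
  · rintro ⟨h1, h2⟩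
    have hprog : InitL P ∩ InitL C ⊆ InitL S := by
      rintro u ⟨hP, ⟨v, hv⟩⟩
      have := (h2 hv).2 u ⟨v, rfl⟩
      rcases this with h | h
      · exact absurd hP h
      · exact h
    refine ⟨Set.Subset.antisymm ?_ ?_, hprog⟩
    · rintro w ⟨hwP, hwC⟩
      obtain ⟨v, hv⟩ := hprog ⟨⟨[], by simpa using hwP⟩, ⟨[], by simpa using hwC⟩⟩
      have : w ∈ C₀ := hC₀pc ⟨v, (hC₀ ▸ hv : _).2⟩
      have : w ∈ P ∩ C₀ := ⟨hwP, this⟩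
      rwa [hC₀] at this
    · intro w hw
      have hwP : w ∈ P := by rw [← hC₀] at hw; exact hw.1
      exact ⟨hwP, h1 ⟨[], by simpa using hw⟩⟩
end

section
/- Let P and S be languages over Σ and suppose the equation P ∩ X = S has a prefix-closed solution. Then (compl(Init(P)) ∪ Init(S))^pref is the largest progressive supervisor: it is prefix-closed, satisfies P ∩ (compl(Init(P)) ∪ Init(S))^pref = S, is progressive, and every progressive prefix-closed solution C satisfies C ⊆ (compl(Init(P)) ∪ Init(S))^pref. -/
/-!
Supervisory control via language equation solving: common definitions.
A language over alphabet `α` is a set of finite words `Set (List α)`.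
-/

variable {α : Type*}

/-- `(compl(Init(P)) ∪ Init(S))^pref` is the largest progressive supervisor. -/
theorem largest_progressive_supervisor (P S : Set (List α))
    (hsolv : ∃ C : Set (List α), IsPrefixClosed C ∧ P ∩ C = S) :
    IsPrefixClosed (prefCl ((InitL P)ᶜ ∪ InitL S)) ∧
      P ∩ prefCl ((InitL P)ᶜ ∪ InitL S) = S ∧
      InitL P ∩ InitL (prefCl ((InitL P)ᶜ ∪ InitL S)) ⊆ InitL S ∧
      ∀ C : Set (List α), IsPrefixClosed C → P ∩ C = S →
        InitL P ∩ InitL C ⊆ InitL S → C ⊆ prefCl ((InitL P)ᶜ ∪ InitL S) := by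
  obtain ⟨C, hC, hPC⟩ := hsolv
  refine ⟨?_, ?_, ?_, ?_⟩
  · rintro u ⟨v, hw, hall⟩
    exact ⟨hall u ⟨v, rfl⟩, fun p hp => hall p (hp.trans ⟨v, rfl⟩)⟩
  · ext w
    constructor
    · rintro ⟨hwP, hwM, -⟩
      rcases hwM with h | ⟨v, hv⟩
      · exact absurd ⟨[], by simpa using hwP⟩ h
      · have hwC : w ∈ C := hC ⟨v, (hPC ▸ hv).2⟩
        exact hPC ▸ ⟨hwP, hwC⟩
    · intro hwS
      have hwP : w ∈ P := (hPC ▸ hwS).1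
      refine ⟨hwP, Or.inr ⟨[], by simpa using hwS⟩, fun p hp => ?_⟩
      obtain ⟨t, rfl⟩ := hp
      exact Or.inr ⟨t, hwS⟩
  · rintro u ⟨huP, v, hv, hall⟩
    rcases hall u ⟨v, rfl⟩ with h | h
    · exact absurd huP h
    · exact h
  · intro C' hC' hPC' hprog w hw
    have key : ∀ p : List α, p <+: w → p ∈ (InitL P)ᶜ ∪ InitL S := by
      intro p hp
      obtain ⟨t, rfl⟩ := hp
      have hpC : p ∈ C' := hC' ⟨t, hw⟩
      by_cases hP : p ∈ InitL P
      · exact Or.inr (hprog ⟨hP, ⟨[], by simpa using hpC⟩⟩)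
      · exact Or.inl hP
    exact ⟨key w ⟨[], by simp⟩, key⟩
end

section
/- Let P and S be languages over Σ and Σuc ⊆ Σ. If the equation P ∩ X = S has a prefix-closed solution under partial controllability, then it has a largest one: there exists a prefix-closed language M with P ∩ M = S and P ∩ Ext(M) = S such that every prefix-closed language C with P ∩ C = S and P ∩ Ext(C) = S satisfies C ⊆ M. -/
/-!
Supervisory control via language equation solving: common definitions.
A language over alphabet `α` is a set of finite words `Set (List α)`.
-/

variable {α : Type*}

lemma tr_final_mem {L : Set (List α)} {Suc : Set α} {w t : List α}
    (h : Tr L Suc w t) : t ∈ L ∨ t = [] := by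
  induction h with
  | nil => exact Or.inr rfl
  | keep _ hmem _ => exact Or.inl hmem
  | drop _ _ _ ih => exact ih

lemma tr_restrict {M C : Set (List α)} {Suc : Set α} (hC : IsPrefixClosed C) (hCM : C ⊆ M)
    {w t : List α} (h : Tr M Suc w t) (ht : t ∈ C ∨ t = []) : Tr C Suc w t := by
  induction h with
  | nil => exact Tr.nil
  | @keep p t a hp hmem ih =>
    rcases ht with ht | ht
    · exact Tr.keep (ih (Or.inl (hC ⟨[a], ht⟩))) ht
    · simp at ht
  | @drop p t a hp hmem ha ih =>
    exact Tr.drop (ih ht) (fun hc => hmem (hCM hc)) ha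

lemma tr_self {L : Set (List α)} {Suc : Set α} (hL : IsPrefixClosed L)
    {w : List α} (hw : w ∈ L) : Tr L Suc w w := by
  induction w using List.reverseRecOn with
  | nil => exact Tr.nil
  | append_singleton p a ih =>
    exact Tr.keep (ih (hL ⟨[a], hw⟩)) hw

/-- If the equation is solvable under partial controllability, it has a largest such solution. -/
theorem partialControllability_largest (P S : Set (List α)) (Suc : Set α)
    (h : ∃ C : Set (List α), IsPrefixClosed C ∧ P ∩ C = S ∧ P ∩ ExtL C Suc = S) :
    ∃ M : Set (List α), IsPrefixClosed M ∧ P ∩ M = S ∧ P ∩ ExtL M Suc = S ∧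
      ∀ C : Set (List α), IsPrefixClosed C → P ∩ C = S → P ∩ ExtL C Suc = S → C ⊆ M := by
  obtain ⟨C₀, hC₀pc, hC₀eq, hC₀ext⟩ := h
  set Sol : Set (Set (List α)) :=
    {C | IsPrefixClosed C ∧ P ∩ C = S ∧ P ∩ ExtL C Suc = S} with hSol
  set M : Set (List α) := ⋃₀ Sol with hM
  have hC₀mem : C₀ ∈ Sol := ⟨hC₀pc, hC₀eq, hC₀ext⟩
  have hsub : ∀ C ∈ Sol, C ⊆ M := fun C hc x hx => ⟨C, hc, hx⟩
  have hMpc : IsPrefixClosed M := by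
    rintro u ⟨v, hv⟩
    obtain ⟨C, hC, huv⟩ := hv
    exact hsub C hC (hC.1 ⟨v, huv⟩)
  -- P ∩ M = S
  have hPM : P ∩ M = S := by
    apply Set.Subset.antisymm
    · rintro w ⟨hwP, C, hC, hwC⟩
      rw [← hC.2.1]; exact ⟨hwP, hwC⟩
    · intro w hw
      rw [← hC₀eq] at hw
      exact ⟨hw.1, hsub C₀ hC₀mem hw.2⟩
  refine ⟨M, hMpc, hPM, ?_, fun C h1 h2 h3 => hsub C ⟨h1, h2, h3⟩⟩
  apply Set.Subset.antisymm
  · rintro w ⟨hwP, t, htr⟩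
    rcases tr_final_mem htr with ht | ht
    · obtain ⟨C, hC, htC⟩ := ht
      have := tr_restrict hC.1 (hsub C hC) htr (Or.inl htC)
      rw [← hC.2.2]; exact ⟨hwP, t, this⟩
    · have := tr_restrict hC₀pc (hsub C₀ hC₀mem) htr (Or.inr ht)
      rw [← hC₀ext]; exact ⟨hwP, t, this⟩
  · intro w hw
    have hwM : w ∈ M := by rw [← hPM] at hw; exact hw.2
    exact ⟨(hPM ▸ hw : w ∈ P ∩ M).1, w, tr_self hMpc hwM⟩
end

section
/- Let P and S be languages over Σ and Σuc ⊆ Σ. Suppose the equation P ∩ X = S has a progressive prefix-closed solution under partial controllability, and let C be a prefix-closed solution (P ∩ C = S). Then C is a progressive solution under partial controllability (i.e. P ∩ Ext(C) = S and Init(P) ∩ Init(Ext(C)) ⊆ Init(S)) if and only if C is a progressive solution (i.e. Init(P) ∩ Init(C) ⊆ Init(S)). -/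
/-!
Supervisory control via language equation solving: common definitions.
A language over alphabet `α` is a set of finite words `Set (List α)`.
-/

variable {α : Type*}

lemma ext_nil' (L : Set (List α)) (Suc : Set α) : ([] : List α) ∈ ExtL L Suc :=
  ⟨[], Tr.nil⟩

lemma tr_prefix_step {L : Set (List α)} {Suc : Set α} {w t : List α}
    (h : Tr L Suc w t) : ∀ p a, w = p ++ [a] → ∃ t', Tr L Suc p t' := by
  cases h with
  | nil => intro p a hpa; simp at hpa
  | @keep p' t' a' h1 h2 =>
    intro p a hpa
    obtain ⟨h3, _⟩ := List.append_inj' hpa rfl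
    exact ⟨t', h3 ▸ h1⟩
  | @drop p' t' a' h1 h2 h3 =>
    intro p a hpa
    obtain ⟨h4, _⟩ := List.append_inj' hpa rfl
    exact ⟨t, h4 ▸ h1⟩

lemma ext_append {L : Set (List α)} {Suc : Set α} :
    ∀ (v u : List α), u ++ v ∈ ExtL L Suc → u ∈ ExtL L Suc := by
  intro v
  induction v using List.reverseRecOn with
  | nil => intro u h; simpa using h
  | append_singleton v a ih =>
    intro u h
    rw [← List.append_assoc] at h
    obtain ⟨t, ht⟩ := h
    obtain ⟨t', ht'⟩ := tr_prefix_step ht (u ++ v) a rfl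
    exact ih u ⟨t', ht'⟩

lemma init_ext_subset {L : Set (List α)} {Suc : Set α} :
    InitL (ExtL L Suc) ⊆ ExtL L Suc := by
  rintro u ⟨v, hv⟩
  exact ext_append v u hv

lemma tr_extend_uc {L : Set (List α)} {Suc : Set α} {p t : List α} {a : α}
    (h : Tr L Suc p t) (ha : a ∈ Suc) : p ++ [a] ∈ ExtL L Suc := by
  by_cases hm : t ++ [a] ∈ L
  · exact ⟨t ++ [a], Tr.keep h hm⟩
  · exact ⟨t, Tr.drop h hm ha⟩

lemma tr_self_of_mem {C : Set (List α)} {Suc : Set α} (hC : IsPrefixClosed C) :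
    ∀ {w : List α}, w ∈ C → Tr C Suc w w := by
  intro w
  induction w using List.reverseRecOn with
  | nil => intro _; exact Tr.nil
  | append_singleton p a ih =>
    intro h
    exact Tr.keep (ih (hC ⟨[a], h⟩)) h

lemma initL_mono {L M : Set (List α)} (h : L ⊆ M) : InitL L ⊆ InitL M := by
  rintro u ⟨v, hv⟩; exact ⟨v, h hv⟩

/-- If a progressive prefix-closed solution under partial controllability exists, then a
prefix-closed solution is progressive under partial controllability iff it is progressive. -/
theorem progressive_pc_iff_progressive (P S : Set (List α)) (Suc : Set α)
    (hex : ∃ C0 : Set (List α), IsPrefixClosed C0 ∧ P ∩ C0 = S ∧ P ∩ ExtL C0 Suc = S ∧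
      InitL P ∩ InitL (ExtL C0 Suc) ⊆ InitL S)
    (C : Set (List α)) (hC : IsPrefixClosed C) (hsol : P ∩ C = S) :
    (P ∩ ExtL C Suc = S ∧ InitL P ∩ InitL (ExtL C Suc) ⊆ InitL S) ↔
      InitL P ∩ InitL C ⊆ InitL S := by
  obtain ⟨C0, hC0pc, hC0sol, hC0pcsol, hC0prog⟩ := hex
  have hSC : S ⊆ C := by rw [← hsol]; exact Set.inter_subset_right
  have hSE0 : S ⊆ ExtL C0 Suc := by rw [← hC0pcsol]; exact Set.inter_subset_right
  constructor
  · rintro ⟨_, hprog⟩ x ⟨hxP, hxC⟩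
    refine hprog ⟨hxP, ?_⟩
    obtain ⟨v, hv⟩ := hxC
    exact ⟨v, ⟨x ++ v, tr_self_of_mem hC hv⟩⟩
  · intro hpr
    have key : ∀ w t, Tr C Suc w t → w ∈ InitL P → w = t ∧ w ∈ InitL S := by
      intro w t h
      induction h with
      | nil =>
        intro hP
        exact ⟨rfl, hC0prog ⟨hP, ⟨[], ext_nil' C0 Suc⟩⟩⟩
      | @keep p t a h1 h2 ih =>
        intro hw
        have hp : p ∈ InitL P := by
          obtain ⟨v, hv⟩ := hw
          exact ⟨[a] ++ v, by rwa [← List.append_assoc]⟩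
        obtain ⟨heq, _⟩ := ih hp
        subst heq
        refine ⟨rfl, hpr ⟨hw, ⟨[], by simpa using h2⟩⟩⟩
      | @drop p t a h1 h2 h3 ih =>
        intro hw
        have hp : p ∈ InitL P := by
          obtain ⟨v, hv⟩ := hw
          exact ⟨[a] ++ v, by rwa [← List.append_assoc]⟩
        obtain ⟨heq, hpS⟩ := ih hp
        subst heq
        exfalso
        have hpE0 : p ∈ ExtL C0 Suc := init_ext_subset (initL_mono hSE0 hpS)
        obtain ⟨t0, ht0⟩ := hpE0
        have hwE0 : p ++ [a] ∈ ExtL C0 Suc := tr_extend_uc ht0 h3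
        have hwS : p ++ [a] ∈ InitL S := hC0prog ⟨hw, ⟨[], by simpa using hwE0⟩⟩
        exact h2 (hC (initL_mono hSC hwS))
    refine ⟨?_, ?_⟩
    · apply Set.Subset.antisymm
      · rintro w ⟨hwP, t, ht⟩
        obtain ⟨_, hwS⟩ := key w t ht ⟨[], by simpa using hwP⟩
        rw [← hsol]
        exact ⟨hwP, hC (initL_mono hSC hwS)⟩
      · intro s hs
        have hsP : s ∈ P := by rw [← hsol] at hs; exact hs.1
        exact ⟨hsP, ⟨s, tr_self_of_mem hC (hSC hs)⟩⟩
    · rintro x ⟨hxP, hxE⟩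
      obtain ⟨t, ht⟩ := init_ext_subset hxE
      exact (key x t ht hxP).2
end

section
/- Let P and S be languages over Σ with S nonempty, let Σuo ⊆ Σ, and suppose the equation P ∩ X = S has a prefix-closed solution. Then the equation has a prefix-closed solution under partial observability (a prefix-closed C with P ∩ C = S and P ∩ Fold(C) = S) if and only if Real(Init(S)) ⊆ compl(P) ∪ S. -/
/-!
Supervisory control via language equation solving: common definitions.
A language over alphabet `α` is a set of finite words `Set (List α)`.
-/

variable {α : Type*}

/-!
`Real(Init S)` is a prefix-closed language sandwiched as `Init S ⊆ Fold(Real(Init S)) ⊆ Real(Init S)`,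
and it lies in `Fold C` for every prefix-closed `C` whose folding contains `Init S`: a letter `a` after
`p` in a word of `Real(Init S)` is witnessed by some `u ++ [a] ∈ Init S` with `π u = π p`, and the folding
only sees `π u`. So a solution under partial observability exists iff `Real(Init S)` itself is one,
i.e. iff `P ∩ Real(Init S) ⊆ S`.
-/

section Languages

variable {Suo : Set α} {L M C : Set (List α)} {u w : List α} {a : α}

theorem proj_append (u v : List α) : proj Suo (u ++ v) = proj Suo u ++ proj Suo v := by
  induction u with
  | nil => simp [proj]
  | cons b u ih => by_cases h : b ∈ Suo <;> simp [proj, h, ih]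

theorem proj_proj (w : List α) : proj Suo (proj Suo w) = proj Suo w := by
  induction w with
  | nil => rfl
  | cons b w ih => by_cases h : b ∈ Suo <;> simp [proj, h, ih]

theorem proj_append_singleton_of_mem (w : List α) (ha : a ∈ Suo) :
    proj Suo (w ++ [a]) = proj Suo w := by
  simp [proj_append, proj, ha]

theorem proj_append_singleton_of_notMem (w : List α) (ha : a ∉ Suo) :
    proj Suo (w ++ [a]) = proj Suo w ++ [a] := by
  simp [proj_append, proj, ha]

theorem subset_initL (L : Set (List α)) : L ⊆ InitL L :=
  fun w hw => ⟨[], by simpa using hw⟩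

theorem IsPrefixClosed.initL_subset (hM : IsPrefixClosed M) (h : L ⊆ M) : InitL L ⊆ M :=
  fun _ ⟨v, hv⟩ => hM ⟨v, h hv⟩

theorem isPrefixClosed_initL (L : Set (List α)) : IsPrefixClosed (InitL L) :=
  fun _ ⟨v, w, h⟩ => ⟨v ++ w, by simpa using h⟩

theorem IsPrefixClosed.mem_of_prefix (hL : IsPrefixClosed L) (huw : u <+: w) (hw : w ∈ L) :
    u ∈ L := by
  obtain ⟨v, rfl⟩ := huw
  exact hL ⟨v, hw⟩

theorem mem_realL_iff :
    w ∈ RealL Suo L ↔ ∀ p a, p ++ [a] <+: w → ∃ u, proj Suo u = proj Suo p ∧ u ++ [a] ∈ L :=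
  ⟨fun h p a ⟨q, hq⟩ => h p q a hq.symm, fun h p q a hw => h p a ⟨q, hw.symm⟩⟩

theorem nil_mem_realL : [] ∈ RealL Suo L :=
  mem_realL_iff.2 fun p a h => by simp [List.prefix_nil] at h

theorem append_singleton_mem_realL_iff :
    w ++ [a] ∈ RealL Suo L ↔
      w ∈ RealL Suo L ∧ ∃ u, proj Suo u = proj Suo w ∧ u ++ [a] ∈ L := by
  simp only [mem_realL_iff, List.prefix_concat_iff, List.append_singleton_inj, or_imp, forall_and]
  constructor
  · rintro ⟨hlast, hinit⟩
    exact ⟨hinit, hlast w a ⟨rfl, rfl⟩⟩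
  · rintro ⟨hinit, hlast⟩
    refine ⟨?_, hinit⟩
    rintro p b ⟨rfl, rfl⟩
    exact hlast

theorem isPrefixClosed_realL : IsPrefixClosed (RealL Suo L) :=
  fun _ ⟨v, hv⟩ p q a hw => hv p (q ++ v) a (by simp [hw])

theorem isPrefixClosed_fold (hC : IsPrefixClosed C) : IsPrefixClosed (Fold Suo C) := by
  rintro w ⟨v, hwv, hpre⟩
  refine ⟨hC ⟨proj Suo v, by rwa [← proj_append]⟩, fun p a hp ha => ?_⟩
  exact hpre p a (hp.trans (List.prefix_append w v)) ha

theorem proj_append_singleton_mem_of_mem_fold (h : w ++ [a] ∈ Fold Suo C) :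
    proj Suo w ++ [a] ∈ C := by
  by_cases ha : a ∈ Suo
  · exact h.2 w a List.prefix_rfl ha
  · simpa [proj_append_singleton_of_notMem w ha] using h.1

theorem proj_mem_realL (hL : IsPrefixClosed L) (hw : w ∈ L) : proj Suo w ∈ RealL Suo L := by
  induction w using List.reverseRecOn with
  | nil => exact nil_mem_realL
  | append_singleton w a ih =>
    have hproj : proj Suo w ∈ RealL Suo L := ih (hL ⟨[a], hw⟩)
    by_cases ha : a ∈ Suo
    · rwa [proj_append_singleton_of_mem w ha]
    · rw [proj_append_singleton_of_notMem w ha]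
      exact append_singleton_mem_realL_iff.2 ⟨hproj, w, (proj_proj w).symm, hw⟩

theorem subset_fold_realL (hL : IsPrefixClosed L) : L ⊆ Fold Suo (RealL Suo L) := by
  intro w hw
  refine ⟨proj_mem_realL hL hw, fun p a hp _ => ?_⟩
  have hpa : p ++ [a] ∈ L := hL.mem_of_prefix hp hw
  exact append_singleton_mem_realL_iff.2
    ⟨proj_mem_realL hL (hL ⟨[a], hpa⟩), p, (proj_proj p).symm, hpa⟩

theorem fold_realL_subset : Fold Suo (RealL Suo L) ⊆ RealL Suo L := by
  intro w hw
  refine mem_realL_iff.2 fun p a hp => ?_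
  have hpa := proj_append_singleton_mem_of_mem_fold
    ((isPrefixClosed_fold isPrefixClosed_realL).mem_of_prefix hp hw)
  obtain ⟨-, u, hu, hua⟩ := append_singleton_mem_realL_iff.1 hpa
  exact ⟨u, hu.trans (proj_proj p), hua⟩

theorem realL_subset_fold (hC : IsPrefixClosed C) (hnil : [] ∈ L) (hL : L ⊆ Fold Suo C) :
    RealL Suo L ⊆ Fold Suo C := by
  intro w hw
  refine ⟨?_, fun p a ⟨q, hq⟩ ha => ?_⟩
  · rcases w.eq_nil_or_concat' with rfl | ⟨w, a, rfl⟩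
    · exact (hL hnil).1
    obtain ⟨-, u, hu, hua⟩ := append_singleton_mem_realL_iff.1 hw
    have hmem : proj Suo w ++ [a] ∈ C := hu ▸ proj_append_singleton_mem_of_mem_fold (hL hua)
    by_cases ha : a ∈ Suo
    · rw [proj_append_singleton_of_mem w ha]
      exact hC ⟨[a], hmem⟩
    · rwa [proj_append_singleton_of_notMem w ha]
  · obtain ⟨u, hu, hua⟩ := hw p q a hq.symm
    exact hu ▸ proj_append_singleton_mem_of_mem_fold (hL hua)

end Languages

/-- Solvability under partial observability iff `Real(Init(S)) ⊆ compl(P) ∪ S`. -/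
theorem partialObservability_solvable_iff (P S : Set (List α)) (Suo : Set α)
    (hS : S.Nonempty)
    (hsolv : ∃ C : Set (List α), IsPrefixClosed C ∧ P ∩ C = S) :
    (∃ C : Set (List α), IsPrefixClosed C ∧ P ∩ C = S ∧ P ∩ Fold Suo C = S) ↔
      RealL Suo (InitL S) ⊆ Pᶜ ∪ S := by
  have hSP : S ⊆ P := by
    obtain ⟨C, -, hC⟩ := hsolv
    exact hC ▸ Set.inter_subset_left
  have hnil : ([] : List α) ∈ InitL S := by
    obtain ⟨s, hs⟩ := hS
    exact ⟨s, hs⟩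
  constructor
  · rintro ⟨C, hC, -, hPF⟩ w hw
    have hIF : InitL S ⊆ Fold Suo C :=
      (isPrefixClosed_fold hC).initL_subset (hPF ▸ Set.inter_subset_right)
    by_cases hwP : w ∈ P
    · exact Or.inr (hPF ▸ ⟨hwP, realL_subset_fold hC hnil hIF hw⟩)
    · exact Or.inl hwP
  · intro hreal
    have hSF : S ⊆ Fold Suo (RealL Suo (InitL S)) :=
      (subset_initL S).trans (subset_fold_realL (isPrefixClosed_initL S))
    have hexact : ∀ D ⊆ RealL Suo (InitL S), S ⊆ D → P ∩ D = S := fun D hD hSD =>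
      Set.Subset.antisymm (fun w ⟨hwP, hwD⟩ => (hreal (hD hwD)).resolve_left (not_not.2 hwP))
        fun s hs => ⟨hSP hs, hSD hs⟩
    exact ⟨_, isPrefixClosed_realL, hexact _ subset_rfl (hSF.trans fold_realL_subset),
      hexact _ fold_realL_subset hSF⟩
end
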